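/- arXiv:2505.15555 — 3 statements merged into one kernel-verified Lean document; each statement's English description precedes it below -/
import Mathlib

section
/- Theorem 2(b) (existence of a global minimizer): If ρ is a loss function that is bounded below, ρ is continuous on [0,∞), and a ≠ 0, then the conditional objective 𝓛 attains a global minimum on [0,∞); i.e., there exists γ* ≥ 0 such that 𝓛(γ*) ≤ 𝓛(γ) for all γ ≥ 0. -/
open Matrix ComplexOrder

noncomputable section

variable {L : ℕ}

/-- The covariance matrix `Σ(γ) = Σ₀ + γ·a aᴴ`. -/
def Sig {L : ℕ} (S0 : Matrix (Fin L) (Fin L) ℂ) (a : Fin L → ℂ) (γ : ℝ) :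
    Matrix (Fin L) (Fin L) ℂ :=
  S0 + (γ : ℂ) • vecMulVec a (star a)

lemma myVecMulVec_mulVec (u v x : Fin L → ℂ) : vecMulVec u v *ᵥ x = (v ⬝ᵥ x) • u := by
  funext i
  simp only [mulVec, dotProduct, vecMulVec_apply, Pi.smul_apply, smul_eq_mul, Finset.sum_mul]
  exact Finset.sum_congr rfl fun j _ => by ring

lemma mySMulPosSemidef (a : Fin L → ℂ) {γ : ℝ} (hγ : 0 ≤ γ) :
    ((γ : ℂ) • vecMulVec a (star a)).PosSemidef := by
  refine PosSemidef.of_dotProduct_mulVec_nonneg ?_ ?_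
  · unfold Matrix.IsHermitian
    rw [conjTranspose_smul]
    congr 1
    · simp
    · ext i j; simp [vecMulVec_apply, conjTranspose_apply, mul_comm]
  · intro x
    rw [smul_mulVec, dotProduct_smul, myVecMulVec_mulVec, dotProduct_smul]
    have h1 : star x ⬝ᵥ a = star (star a ⬝ᵥ x) := by
      simp [dotProduct, Finset.sum_comm, mul_comm]
    rw [h1, smul_eq_mul, smul_eq_mul, mul_comm (star a ⬝ᵥ x)]
    exact mul_nonneg (by exact_mod_cast hγ) (star_mul_self_nonneg _)

lemma mySigPosDef {S0 : Matrix (Fin L) (Fin L) ℂ} (hS0 : S0.PosDef) (a : Fin L → ℂ)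
    {γ : ℝ} (hγ : 0 ≤ γ) : (Sig S0 a γ).PosDef :=
  hS0.add_posSemidef (mySMulPosSemidef a hγ)

lemma myDetSig {S0 : Matrix (Fin L) (Fin L) ℂ} (hS0 : S0.PosDef) (a : Fin L → ℂ) (γ : ℝ) :
    (Sig S0 a γ).det = S0.det * (1 + (γ : ℂ) * (star a ⬝ᵥ S0⁻¹ *ᵥ a)) := by
  have h1 : Sig S0 a γ = S0 + replicateCol Unit ((γ:ℂ) • a) * replicateRow Unit (star a) := by
    rw [replicateCol_smul, Matrix.smul_mul, ← vecMulVec_eq Unit]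
    rfl
  rw [h1, det_add_replicateCol_mul_replicateRow hS0.det_pos.ne'.isUnit]
  congr 1
  rw [Matrix.mul_assoc, ← replicateCol_mulVec, det_unique, Matrix.add_apply,
    Matrix.one_apply_eq, replicateRow_mul_replicateCol_apply, mulVec_smul, dotProduct_smul, smul_eq_mul]

lemma myDetSigRe {S0 : Matrix (Fin L) (Fin L) ℂ} (hS0 : S0.PosDef) (a : Fin L → ℂ) (γ : ℝ) :
    (Sig S0 a γ).det.re
      = S0.det.re * (1 + γ * (star a ⬝ᵥ S0⁻¹ *ᵥ a).re) := by
  have hd : S0.det.im = 0 := ((Complex.lt_def.mp hS0.det_pos).2).symm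
  have hq : (star a ⬝ᵥ S0⁻¹ *ᵥ a).im = 0 := by
    have := hS0.inv.posSemidef.dotProduct_mulVec_nonneg a
    exact ((Complex.le_def.mp this).2).symm
  rw [myDetSig hS0]
  simp [Complex.mul_re, Complex.mul_im, Complex.add_re, Complex.add_im, hd, hq]

lemma mySigCont (S0 : Matrix (Fin L) (Fin L) ℂ) (a : Fin L → ℂ) :
    Continuous (fun γ : ℝ => Sig S0 a γ) :=
  continuous_const.add (Complex.continuous_ofReal.smul continuous_const)

/-- The squared Mahalanobis distance `s(γ) = yᴴ Σ(γ)⁻¹ y` (a real number). -/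
def mdist {L : ℕ} (S0 : Matrix (Fin L) (Fin L) ℂ) (a : Fin L → ℂ) (y : Fin L → ℂ)
    (γ : ℝ) : ℝ :=
  (star y ⬝ᵥ (Sig S0 a γ)⁻¹ *ᵥ y).re

lemma myMdistContOn {S0 : Matrix (Fin L) (Fin L) ℂ} (hS0 : S0.PosDef) (a : Fin L → ℂ)
    (y : Fin L → ℂ) : ContinuousOn (fun γ => mdist S0 a y γ) (Set.Ici 0) := by
  intro γ0 hγ0
  apply ContinuousAt.continuousWithinAt
  have hne : (Sig S0 a γ0).det ≠ 0 := (mySigPosDef hS0 a hγ0).det_pos.ne'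
  have hdet : ContinuousAt (fun γ => (Sig S0 a γ).det) γ0 :=
    ((mySigCont S0 a).matrix_det).continuousAt
  have hadj : ContinuousAt (fun γ => (Sig S0 a γ).adjugate) γ0 :=
    ((mySigCont S0 a).matrix_adjugate).continuousAt
  have hM : ContinuousAt (fun γ => (Sig S0 a γ)⁻¹) γ0 := by
    simp only [Matrix.inv_def, Ring.inverse_eq_inv]
    exact (hdet.inv₀ hne).smul hadj
  have hg : Continuous (fun A : Matrix (Fin L) (Fin L) ℂ => (star y ⬝ᵥ A *ᵥ y).re) :=
    Complex.continuous_re.comp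
      (continuous_const.dotProduct (continuous_id.matrix_mulVec continuous_const))
  exact hg.continuousAt.comp hM

lemma myMdistNonneg {S0 : Matrix (Fin L) (Fin L) ℂ} (hS0 : S0.PosDef) (a : Fin L → ℂ)
    (y : Fin L → ℂ) {γ : ℝ} (hγ : 0 ≤ γ) : 0 ≤ mdist S0 a y γ := by
  have := (mySigPosDef hS0 a hγ).inv.posSemidef.dotProduct_mulVec_nonneg y
  exact (Complex.le_def.mp this).1

/-- The conditional objective `𝓛(γ) = (1/(bM)) Σₘ ρ(sₘ(γ)) + log det Σ(γ)`. -/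
def obj {L M : ℕ} (S0 : Matrix (Fin L) (Fin L) ℂ) (a : Fin L → ℂ)
    (y : Fin M → Fin L → ℂ) (b : ℝ) (ρ : ℝ → ℝ) (γ : ℝ) : ℝ :=
  (1 / (b * M)) * ∑ m, ρ (mdist S0 a (y m) γ) + Real.log ((Sig S0 a γ).det.re)

theorem stmt2 (L M : ℕ) (hL : 0 < L) (hM : 0 < M)
    (S0 : Matrix (Fin L) (Fin L) ℂ) (hS0 : S0.PosDef)
    (a : Fin L → ℂ) (y : Fin M → Fin L → ℂ) (b : ℝ) (hb : 0 < b)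
    (ρ : ℝ → ℝ)
    (hmono : MonotoneOn ρ (Set.Ici 0))
    (hdiff : ∀ t > (0 : ℝ), DifferentiableAt ℝ ρ t)
    (hderiv : ∀ t > (0 : ℝ), 0 ≤ deriv ρ t)
    (hgeo : ConvexOn ℝ Set.univ (fun x => ρ (Real.exp x)))
    (hbdd : ∃ r : ℝ, ∀ t ≥ (0 : ℝ), r ≤ ρ t)
    (hcont : ContinuousOn ρ (Set.Ici 0))
    (ha : a ≠ 0) :
    ∃ γstar ≥ (0 : ℝ), ∀ γ ≥ (0 : ℝ), obj S0 a y b ρ γstar ≤ obj S0 a y b ρ γ := by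
  obtain ⟨r, hr⟩ := hbdd
  set q : ℂ := star a ⬝ᵥ S0⁻¹ *ᵥ a with hqdef
  have hqpos : 0 < q := hS0.inv.dotProduct_mulVec_pos ha
  set c : ℝ := q.re with hcdef
  have hc : 0 < c := by simpa using (Complex.lt_def.mp hqpos).1
  set d0 : ℝ := S0.det.re with hd0def
  have hd0 : 0 < d0 := by simpa using (Complex.lt_def.mp hS0.det_pos).1
  -- positivity of det.re
  have hdre : ∀ γ : ℝ, (Sig S0 a γ).det.re = d0 * (1 + γ * c) := fun γ => myDetSigRe hS0 a γ
  have hdpos : ∀ γ ≥ (0:ℝ), 0 < (Sig S0 a γ).det.re := by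
    intro γ hγ
    rw [hdre]
    have : 0 ≤ γ * c := mul_nonneg hγ hc.le
    nlinarith
  -- lower bound on obj
  have hMpos : (0:ℝ) < (M:ℝ) := by exact_mod_cast hM
  have hbM : (0:ℝ) < 1 / (b * M) := by positivity
  have hlb : ∀ γ ≥ (0:ℝ), r / b + Real.log ((Sig S0 a γ).det.re) ≤ obj S0 a y b ρ γ := by
    intro γ hγ
    have hsum : (M:ℝ) * r ≤ ∑ m, ρ (mdist S0 a (y m) γ) := by
      calc (M:ℝ) * r = ∑ _m : Fin M, r := by simp [mul_comm]
        _ ≤ _ := Finset.sum_le_sum fun m _ => hr _ (myMdistNonneg hS0 a (y m) hγ)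
    have h1 : (1 / (b * M)) * ((M:ℝ) * r) ≤ (1 / (b * M)) * ∑ m, ρ (mdist S0 a (y m) γ) :=
      mul_le_mul_of_nonneg_left hsum hbM.le
    have h2 : (1 / (b * (M:ℝ))) * ((M:ℝ) * r) = r / b := by
      field_simp
    rw [h2] at h1
    unfold obj
    linarith
  -- continuity of obj on Ici 0
  have hcontObj : ContinuousOn (fun γ => obj S0 a y b ρ γ) (Set.Ici 0) := by
    apply ContinuousOn.add
    · apply ContinuousOn.mul continuousOn_const
      apply continuousOn_finset_sum
      intro m _
      exact hcont.comp (myMdistContOn hS0 a (y m)) fun γ hγ => myMdistNonneg hS0 a (y m) hγ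
    · intro γ0 hγ0
      apply ContinuousAt.continuousWithinAt
      have hre : Continuous (fun γ : ℝ => (Sig S0 a γ).det.re) :=
        Complex.continuous_re.comp ((mySigCont S0 a).matrix_det)
      exact ContinuousAt.comp (g := Real.log) (f := fun γ : ℝ => (Sig S0 a γ).det.re)
        (Real.continuousAt_log (hdpos γ0 hγ0).ne') hre.continuousAt
  -- choose threshold R
  set K : ℝ := obj S0 a y b ρ 0 - r / b with hKdef
  set R : ℝ := max 0 ((Real.exp K / d0 - 1) / c) with hRdef
  have hR0 : (0:ℝ) ≤ R := le_max_left _ _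
  have hbig : ∀ γ ≥ R, obj S0 a y b ρ 0 ≤ obj S0 a y b ρ γ := by
    intro γ hγR
    have hγ0 : (0:ℝ) ≤ γ := le_trans hR0 hγR
    have h1 : Real.exp K / d0 - 1 ≤ γ * c :=
      (div_le_iff₀ hc).mp (le_trans (le_max_right _ _) hγR)
    have h2 : Real.exp K ≤ d0 * (1 + γ * c) := by
      have := (div_le_iff₀ hd0).mp (by linarith : Real.exp K / d0 ≤ 1 + γ * c)
      linarith
    have h3 : K ≤ Real.log ((Sig S0 a γ).det.re) := by
      rw [hdre]
      rw [Real.le_log_iff_exp_le (lt_of_lt_of_le (Real.exp_pos K) h2)]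
      exact h2
    have := hlb γ hγ0
    rw [hKdef] at h3
    linarith
  -- minimize on compact [0, R]
  obtain ⟨γs, hγs, hmin⟩ := (isCompact_Icc (a := (0:ℝ)) (b := R)).exists_isMinOn
    ⟨0, by exact ⟨le_refl _, hR0⟩⟩ (hcontObj.mono (Set.Icc_subset_Ici_self))
  refine ⟨γs, hγs.1, fun γ hγ => ?_⟩
  rcases le_total γ R with hle | hge
  · exact hmin ⟨hγ, hle⟩
  · exact le_trans (hmin ⟨le_refl 0, hR0⟩) (hbig γ hge)
end
end

section
/- The fixed-point update is a critical point of the surrogate (Appendix C): Assume ρ is a loss function, a ≠ 0 (so d > 0), and fix γ⁰ > 0. Define the surrogate Q(γ | γ⁰) = (1/(bM)) · Σ_{m=1}^M [ρ(sₘ(γ⁰)) + u(sₘ(γ⁰))·(sₘ(γ) − sₘ(γ⁰))] + log det Σ(γ). Then for γ > 0, the derivative of γ ↦ Q(γ | γ⁰) vanishes at γ if and only if γ = (σ̂²(γ⁰) − d)/d² = H(γ⁰). -/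
open Matrix ComplexOrder

noncomputable section

/-- The scalar `d = aᴴ Σ₀⁻¹ a`. -/
def dcoef {L : ℕ} (S0 : Matrix (Fin L) (Fin L) ℂ) (a : Fin L → ℂ) : ℝ :=
  (star a ⬝ᵥ S0⁻¹ *ᵥ a).re

/-- `σ̂²(γ) = (1/(bM)) Σₘ u(sₘ(γ)) |yₘᴴ b₀|²` with `b₀ = Σ₀⁻¹ a`. -/
def sigmaHat {L M : ℕ} (S0 : Matrix (Fin L) (Fin L) ℂ) (a : Fin L → ℂ)
    (y : Fin M → Fin L → ℂ) (b : ℝ) (u : ℝ → ℝ) (γ : ℝ) : ℝ :=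
  (1 / (b * M)) * ∑ m, u (mdist S0 a (y m) γ) * Complex.normSq (star (y m) ⬝ᵥ S0⁻¹ *ᵥ a)

/-- The surrogate `Q(γ | γ⁰)` from Appendix C (with weight `u = deriv ρ`). -/
def surr {L M : ℕ} (S0 : Matrix (Fin L) (Fin L) ℂ) (a : Fin L → ℂ)
    (y : Fin M → Fin L → ℂ) (b : ℝ) (ρ : ℝ → ℝ) (γ0 γ : ℝ) : ℝ :=
  (1 / (b * M)) * ∑ m, (ρ (mdist S0 a (y m) γ0)
      + deriv ρ (mdist S0 a (y m) γ0) * (mdist S0 a (y m) γ - mdist S0 a (y m) γ0))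
    + Real.log ((Sig S0 a γ).det.re)

lemma mul_vecMulVec' {L : ℕ} (A : Matrix (Fin L) (Fin L) ℂ) (w v : Fin L → ℂ) :
    A * vecMulVec w v = vecMulVec (A *ᵥ w) v := by
  ext i j
  simp only [Matrix.mul_apply, vecMulVec_apply, mulVec, dotProduct, Finset.sum_mul]
  exact Finset.sum_congr rfl fun k _ => by ring

lemma vecMulVec_mul' {L : ℕ} (A : Matrix (Fin L) (Fin L) ℂ) (w v : Fin L → ℂ) :
    vecMulVec w v * A = vecMulVec w (v ᵥ* A) := by
  ext i j
  simp only [Matrix.mul_apply, vecMulVec_apply, vecMul, dotProduct, Finset.mul_sum]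
  exact Finset.sum_congr rfl fun k _ => by ring

lemma vecMulVec_mul_vecMulVec' {L : ℕ} (w v w' v' : Fin L → ℂ) :
    vecMulVec w v * vecMulVec w' v' = (v ⬝ᵥ w') • vecMulVec w v' := by
  ext i j
  simp only [Matrix.mul_apply, vecMulVec_apply, Matrix.smul_apply, smul_eq_mul, dotProduct,
    Finset.sum_mul]
  rw [Finset.sum_congr rfl fun k (_ : k ∈ Finset.univ) =>
    (by ring : w i * v k * (w' k * v' j) = v k * w' k * (w i * v' j)), ← Finset.sum_mul]

lemma vecMulVec_mulVec' {L : ℕ} (w v x : Fin L → ℂ) :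
    vecMulVec w v *ᵥ x = (v ⬝ᵥ x) • w := by
  ext i
  simp only [mulVec, vecMulVec_apply, dotProduct, Pi.smul_apply, smul_eq_mul, Finset.sum_mul]
  rw [Finset.sum_congr rfl fun k (_ : k ∈ Finset.univ) =>
    (by ring : w i * v k * x k = v k * x k * w i), ← Finset.sum_mul]

lemma smul_vecMulVec' {L : ℕ} (c : ℂ) (w v : Fin L → ℂ) :
    c • vecMulVec w v = vecMulVec (c • w) v := by
  ext i j; simp [vecMulVec_apply, mul_assoc]

lemma sherman {L : ℕ} (S0 : Matrix (Fin L) (Fin L) ℂ) (hS0 : S0.PosDef)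
    (a : Fin L → ℂ) (d : ℝ) (hd : star a ⬝ᵥ S0⁻¹ *ᵥ a = (d : ℂ))
    (γ : ℝ) (h1 : (1 : ℝ) + γ * d ≠ 0) :
    (Sig S0 a γ)⁻¹ = S0⁻¹ -
      ((γ / (1 + γ * d) : ℝ) : ℂ) • vecMulVec (S0⁻¹ *ᵥ a) (star (S0⁻¹ *ᵥ a)) := by
  have hunit : IsUnit S0.det := (Matrix.isUnit_iff_isUnit_det S0).mp hS0.isUnit
  set b0 := S0⁻¹ *ᵥ a with hb0
  set c : ℂ := ((γ / (1 + γ * d) : ℝ) : ℂ) with hc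
  have hb0s : star b0 = star a ᵥ* S0⁻¹ := by
    rw [hb0, star_mulVec, hS0.isHermitian.inv]
  have hSb0 : S0 *ᵥ b0 = a := by
    rw [hb0, mulVec_mulVec, Matrix.mul_nonsing_inv _ hunit, one_mulVec]
  apply Matrix.inv_eq_right_inv
  rw [Sig, Matrix.add_mul, Matrix.mul_sub, Matrix.mul_sub,
    Matrix.mul_nonsing_inv _ hunit, Matrix.mul_smul, mul_vecMulVec', hSb0,
    Matrix.smul_mul, vecMulVec_mul', ← hb0s, Matrix.smul_mul, Matrix.mul_smul,
    vecMulVec_mul_vecMulVec', hb0, hd]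
  have hreal : γ - γ / (1 + γ * d) - γ * (γ / (1 + γ * d)) * d = 0 := by
    field_simp
    ring
  have hs : (γ : ℂ) - c - (γ : ℂ) * c * (d : ℂ) = 0 := by
    rw [hc]
    have : (γ : ℂ) - ((γ / (1 + γ * d) : ℝ) : ℂ) - (γ : ℂ) * ((γ / (1 + γ * d) : ℝ) : ℂ) * (d : ℂ)
        = ((γ - γ / (1 + γ * d) - γ * (γ / (1 + γ * d)) * d : ℝ) : ℂ) := by
      push_cast; ring
    rw [this, hreal, Complex.ofReal_zero]
  linear_combination (norm := module) hs • vecMulVec a (star b0)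

lemma det_Sig {L : ℕ} (S0 : Matrix (Fin L) (Fin L) ℂ) (hS0 : S0.PosDef)
    (a : Fin L → ℂ) (d : ℝ) (hd : star a ⬝ᵥ S0⁻¹ *ᵥ a = (d : ℂ)) (γ : ℝ) :
    (Sig S0 a γ).det = S0.det * ((1 + γ * d : ℝ) : ℂ) := by
  have hunit : IsUnit S0.det := (Matrix.isUnit_iff_isUnit_det S0).mp hS0.isUnit
  rw [Sig, smul_vecMulVec', vecMulVec_eq Unit, Matrix.det_add_replicateCol_mul_replicateRow hunit]
  congr 1
  rw [Matrix.det_unique, Matrix.mul_assoc, ← Matrix.replicateCol_mulVec, Matrix.add_apply,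
    Matrix.one_apply_eq, Matrix.replicateRow_mul_replicateCol_apply, Matrix.mulVec_smul, dotProduct_smul,
    hd, smul_eq_mul]
  push_cast
  ring

lemma mdist_eq {L : ℕ} (S0 : Matrix (Fin L) (Fin L) ℂ) (hS0 : S0.PosDef)
    (a : Fin L → ℂ) (d : ℝ) (hd : star a ⬝ᵥ S0⁻¹ *ᵥ a = (d : ℂ))
    (y : Fin L → ℂ) (γ : ℝ) (h1 : (1 : ℝ) + γ * d ≠ 0) :
    mdist S0 a y γ = (star y ⬝ᵥ S0⁻¹ *ᵥ y).re
      - γ / (1 + γ * d) * Complex.normSq (star y ⬝ᵥ S0⁻¹ *ᵥ a) := by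
  have hconj : star (S0⁻¹ *ᵥ a) ⬝ᵥ y = (starRingEnd ℂ) (star y ⬝ᵥ (S0⁻¹ *ᵥ a)) := by
    simp [dotProduct, map_sum, mul_comm]
  rw [mdist, sherman S0 hS0 a d hd γ h1, Matrix.sub_mulVec, dotProduct_sub,
    Matrix.smul_mulVec, vecMulVec_mulVec', dotProduct_smul, dotProduct_smul,
    hconj, smul_eq_mul, smul_eq_mul, mul_comm ((starRingEnd ℂ) _), Complex.mul_conj,
    ← Complex.ofReal_mul, Complex.sub_re, Complex.ofReal_re]

theorem stmt13 (L M : ℕ) (hL : 0 < L) (hM : 0 < M)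
    (S0 : Matrix (Fin L) (Fin L) ℂ) (hS0 : S0.PosDef)
    (a : Fin L → ℂ) (y : Fin M → Fin L → ℂ) (b : ℝ) (hb : 0 < b)
    (ρ : ℝ → ℝ)
    (hmono : MonotoneOn ρ (Set.Ici 0))
    (hdiff : ∀ t > (0 : ℝ), DifferentiableAt ℝ ρ t)
    (hderiv : ∀ t > (0 : ℝ), 0 ≤ deriv ρ t)
    (hgeo : ConvexOn ℝ Set.univ (fun x => ρ (Real.exp x)))
    (ha : a ≠ 0)
    (γ0 : ℝ) (hγ0 : 0 < γ0) :
    ∀ γ > (0 : ℝ),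
      (deriv (surr S0 a y b ρ γ0) γ = 0 ↔
        γ = (sigmaHat S0 a y b (deriv ρ) γ0 - dcoef S0 a) / (dcoef S0 a) ^ 2) := by
  intro γ hγ
  set d := dcoef S0 a with hdd
  have hZpos : 0 < star a ⬝ᵥ S0⁻¹ *ᵥ a := hS0.inv.dotProduct_mulVec_pos ha
  obtain ⟨hre, him⟩ := Complex.lt_def.mp hZpos
  simp only [Complex.zero_re, Complex.zero_im] at hre him
  have hdpos : 0 < d := by rw [hdd, dcoef]; exact hre
  have hd : star a ⬝ᵥ S0⁻¹ *ᵥ a = (d : ℂ) := by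
    rw [hdd, dcoef]
    exact Complex.ext (by simp) (by simp [← him])
  have hdet : 0 < S0.det := hS0.det_pos
  obtain ⟨hrre, hrim⟩ := Complex.lt_def.mp hdet
  simp only [Complex.zero_re, Complex.zero_im] at hrre hrim
  set r := S0.det.re with hrr
  have hrpos : 0 < r := hrre
  have hdetre : S0.det = (r : ℂ) := Complex.ext rfl (by simp [← hrim])
  set σ := sigmaHat S0 a y b (deriv ρ) γ0 with hσ
  set K : ℝ := (1 / (b * M)) * ∑ m, (ρ (mdist S0 a (y m) γ0)
      + deriv ρ (mdist S0 a (y m) γ0)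
        * ((star (y m) ⬝ᵥ S0⁻¹ *ᵥ (y m)).re - mdist S0 a (y m) γ0)) with hK
  set F : ℝ → ℝ := fun x => K - σ * (x / (1 + x * d)) + (Real.log r + Real.log (1 + x * d))
    with hF
  have hsurr : ∀ x ∈ Set.Ioi (0 : ℝ), surr S0 a y b ρ γ0 x = F x := by
    intro x hx
    have hx0 : 0 < x := hx
    have hx1 : (0 : ℝ) < 1 + x * d := by nlinarith
    have hlogpart : Real.log ((Sig S0 a x).det.re) = Real.log r + Real.log (1 + x * d) := by
      rw [det_Sig S0 hS0 a d hd x, hdetre, ← Complex.ofReal_mul, Complex.ofReal_re,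
        Real.log_mul hrpos.ne' hx1.ne']
    have hsum : ∑ m, (ρ (mdist S0 a (y m) γ0)
          + deriv ρ (mdist S0 a (y m) γ0) * (mdist S0 a (y m) x - mdist S0 a (y m) γ0))
        = (∑ m, (ρ (mdist S0 a (y m) γ0)
            + deriv ρ (mdist S0 a (y m) γ0)
              * ((star (y m) ⬝ᵥ S0⁻¹ *ᵥ (y m)).re - mdist S0 a (y m) γ0)))
          - (x / (1 + x * d)) * ∑ m, deriv ρ (mdist S0 a (y m) γ0)
              * Complex.normSq (star (y m) ⬝ᵥ S0⁻¹ *ᵥ a) := by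
      rw [Finset.mul_sum, ← Finset.sum_sub_distrib]
      apply Finset.sum_congr rfl
      intro m _
      rw [mdist_eq S0 hS0 a d hd (y m) x hx1.ne']
      ring
    rw [surr, hlogpart, hsum, hF, hσ, sigmaHat, hK]
    ring
  have hderiv_eq : deriv (surr S0 a y b ρ γ0) γ = deriv F γ := by
    apply Filter.EventuallyEq.deriv_eq
    filter_upwards [isOpen_Ioi.mem_nhds (Set.mem_Ioi.mpr hγ)] with x hx
    exact hsurr x hx
  have h1γ : (0 : ℝ) < 1 + γ * d := by nlinarith
  have hden : HasDerivAt (fun x : ℝ => 1 + x * d) d γ := by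
    simpa using ((hasDerivAt_id γ).mul_const d).const_add 1
  have hq : HasDerivAt (fun x : ℝ => x / (1 + x * d)) (1 / (1 + γ * d) ^ 2) γ := by
    have h := (hasDerivAt_id γ).div hden h1γ.ne'
    refine h.congr_deriv ?_
    simp only [id]
    field_simp
    ring
  have hlog : HasDerivAt (fun x : ℝ => Real.log (1 + x * d)) (d / (1 + γ * d)) γ := by
    have h := (Real.hasDerivAt_log h1γ.ne').comp γ hden
    exact h.congr_deriv (div_eq_inv_mul _ _).symm
  have hFd : HasDerivAt F (-σ * (1 / (1 + γ * d) ^ 2) + d / (1 + γ * d)) γ := by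
    have h := ((hasDerivAt_const γ K).sub (hq.const_mul σ)).add
      ((hasDerivAt_const γ (Real.log r)).add hlog)
    refine h.congr_deriv ?_
    ring
  rw [hderiv_eq, hFd.deriv]
  have hsplit : -σ * (1 / (1 + γ * d) ^ 2) + d / (1 + γ * d)
      = (d * (1 + γ * d) - σ) / (1 + γ * d) ^ 2 := by
    field_simp
    ring
  rw [hsplit, div_eq_zero_iff]
  have hne : ((1 + γ * d) ^ 2 : ℝ) ≠ 0 := pow_ne_zero 2 h1γ.ne'
  constructor
  · rintro (h | h)
    · rw [eq_div_iff (pow_ne_zero 2 hdpos.ne')]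
      nlinarith [h]
    · exact absurd h hne
  · intro h
    left
    rw [eq_div_iff (pow_ne_zero 2 hdpos.ne')] at h
    nlinarith [h]
end
end

section
/- Lower bound of the conditional objective (proof of Theorem 2(b)): If ρ is a loss function bounded below by a real number r₀ (ρ(t) ≥ r₀ for all t ≥ 0), then for all γ ≥ 0, log det Σ(γ) ≥ log det Σ₀ and hence 𝓛(γ) ≥ r₀/b + log det Σ₀; in particular 𝓛 is bounded below on [0,∞). -/
open Matrix ComplexOrder

noncomputable section

lemma aux_psd {L : ℕ} (a : Fin L → ℂ) {γ : ℝ} (hγ : 0 ≤ γ) :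
    ((γ : ℂ) • vecMulVec a (star a)).PosSemidef := by
  refine PosSemidef.of_dotProduct_mulVec_nonneg ?_ fun x => ?_
  · ext i j
    simp only [Matrix.conjTranspose_apply, Matrix.smul_apply, Matrix.vecMulVec_apply,
      star_mul', star_star, Pi.star_apply, smul_eq_mul, Complex.star_def, Complex.conj_conj,
      Complex.conj_ofReal]
    ring
  · have key : star x ⬝ᵥ (vecMulVec a (star a)) *ᵥ x
        = star (star a ⬝ᵥ x) * (star a ⬝ᵥ x) := by
      simp [dotProduct, Matrix.mulVec, Matrix.vecMulVec_apply, dotProduct,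
        Finset.mul_sum, Finset.sum_mul]
      rw [Finset.sum_comm]
      congr 1; ext i; congr 1; ext j; ring
    rw [Matrix.smul_mulVec, dotProduct_smul, smul_eq_mul, key]
    exact mul_nonneg (by exact_mod_cast Complex.zero_le_real.mpr hγ)
      (star_mul_self_nonneg _)

lemma sig_posdef {L : ℕ} {S0 : Matrix (Fin L) (Fin L) ℂ} (hS0 : S0.PosDef)
    (a : Fin L → ℂ) {γ : ℝ} (hγ : 0 ≤ γ) : (Sig S0 a γ).PosDef :=
  hS0.add_posSemidef (aux_psd a hγ)

lemma aux_det {L : ℕ} {S0 : Matrix (Fin L) (Fin L) ℂ} (hS0 : S0.PosDef)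
    (a : Fin L → ℂ) {γ : ℝ} (hγ : 0 ≤ γ) :
    S0.det.re ≤ (Sig S0 a γ).det.re := by
  have hq : (0:ℂ) ≤ star a ⬝ᵥ S0⁻¹ *ᵥ a := hS0.inv.posSemidef.dotProduct_mulVec_nonneg a
  set q : ℂ := star a ⬝ᵥ S0⁻¹ *ᵥ a with hqdef
  have hqre : 0 ≤ q.re ∧ 0 = q.im := Complex.nonneg_iff.mp hq
  have hd : (0:ℂ) < S0.det := hS0.det_pos
  have hdre : 0 < S0.det.re ∧ (0:ℂ).im = S0.det.im := Complex.lt_def.mp hd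
  have key : (Sig S0 a γ).det = S0.det * (1 + (γ:ℂ) * q) := by
    have hcr : replicateCol Unit ((γ:ℂ) • a) * replicateRow Unit (star a)
        = (γ:ℂ) • vecMulVec a (star a) := by
      ext i j
      simp [Matrix.mul_apply, Matrix.vecMulVec_apply, mul_assoc]
    have hrw : Sig S0 a γ = S0 + replicateCol Unit ((γ:ℂ) • a) * replicateRow Unit (star a) := by
      rw [Sig, hcr]
    rw [hrw, det_add_replicateCol_mul_replicateRow hS0.det_pos.ne'.isUnit]
    congr 1
    rw [det_unique]
    simp only [Matrix.add_apply, Matrix.one_apply_eq]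
    congr 1
    simp only [Matrix.mul_apply, Matrix.replicateRow_apply, Matrix.replicateCol_apply, Pi.smul_apply,
      smul_eq_mul, Finset.sum_mul, Finset.mul_sum, hqdef, dotProduct, Matrix.mulVec,
      dotProduct, Pi.star_apply]
    rw [Finset.sum_comm]
    refine Finset.sum_congr rfl fun i _ => ?_
    refine Finset.sum_congr rfl fun j _ => ?_
    ring
  have heq : (Sig S0 a γ).det.re = S0.det.re * (1 + γ * q.re) := by
    rw [key]
    simp [Complex.mul_re, Complex.mul_im, ← hdre.2, ← hqre.2]
  rw [heq]
  nlinarith [mul_nonneg hdre.1.le (mul_nonneg hγ hqre.1)]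

theorem stmt18 (L M : ℕ) (hL : 0 < L) (hM : 0 < M)
    (S0 : Matrix (Fin L) (Fin L) ℂ) (hS0 : S0.PosDef)
    (a : Fin L → ℂ) (y : Fin M → Fin L → ℂ) (b : ℝ) (hb : 0 < b)
    (ρ : ℝ → ℝ)
    (hmono : MonotoneOn ρ (Set.Ici 0))
    (hdiff : ∀ t > (0 : ℝ), DifferentiableAt ℝ ρ t)
    (hderiv : ∀ t > (0 : ℝ), 0 ≤ deriv ρ t)
    (hgeo : ConvexOn ℝ Set.univ (fun x => ρ (Real.exp x)))
    (r₀ : ℝ) (hr₀ : ∀ t ≥ (0 : ℝ), r₀ ≤ ρ t) :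
    ∀ γ ≥ (0 : ℝ),
      Real.log (S0.det.re) ≤ Real.log ((Sig S0 a γ).det.re) ∧
      r₀ / b + Real.log (S0.det.re) ≤ obj S0 a y b ρ γ := by
  intro γ hγ
  have hdre : 0 < S0.det.re := (Complex.lt_def.mp hS0.det_pos).1
  have hlog : Real.log (S0.det.re) ≤ Real.log ((Sig S0 a γ).det.re) :=
    Real.log_le_log hdre (aux_det hS0 a hγ)
  refine ⟨hlog, ?_⟩
  have hSig := sig_posdef hS0 a hγ
  have hmnn : ∀ m, 0 ≤ mdist S0 a (y m) γ := fun m =>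
    (Complex.nonneg_iff.mp (hSig.inv.posSemidef.dotProduct_mulVec_nonneg (y m))).1
  have hsum : (M : ℝ) * r₀ ≤ ∑ m, ρ (mdist S0 a (y m) γ) := by
    calc (M : ℝ) * r₀ = ∑ _m : Fin M, r₀ := by simp [mul_comm]
    _ ≤ _ := Finset.sum_le_sum fun m _ => hr₀ _ (hmnn m)
  have hbM : 0 < 1 / (b * M) := by positivity
  have h1 : r₀ / b ≤ (1 / (b * M)) * ∑ m, ρ (mdist S0 a (y m) γ) := by
    have : r₀ / b = (1 / (b * M)) * ((M : ℝ) * r₀) := by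
      have hM' : (M : ℝ) ≠ 0 := Nat.cast_ne_zero.mpr hM.ne'
      field_simp
    rw [this]
    exact mul_le_mul_of_nonneg_left hsum hbM.le
  unfold obj
  linarith
end
end
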